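/- arXiv:1601.08169 — 7 statements merged into one kernel-verified Lean document; each statement's English description precedes it below -/
import Mathlib

section
/- Let M ≥ 1 be an integer and let x_1, …, x_M be nonnegative real numbers with x = x_1 + ⋯ + x_M. Then 0 ≤ exp(x) − ∏_{i=1}^{M} (1 + x_i) ≤ x · exp(x) · max_{1≤i≤M} x_i. -/
/-!
Write `exp x = ∏ exp xᵢ` and compare factor by factor: `1 + xᵢ ≤ exp xᵢ` and
`exp xᵢ - (1 + xᵢ) ≤ xᵢ² exp xᵢ`. Replacing the factors one at a time, each replacement costs at
most `xᵢ²` times the full product, so `exp x - ∏ (1 + xᵢ) ≤ (∑ xᵢ²) exp x`, and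
`∑ xᵢ² ≤ x · maxᵢ xᵢ`.
-/

open Finset

theorem Finset.prod_sub_prod_le_sum_mul_prod {ι R : Type*} [CommRing R] [LinearOrder R]
    [IsOrderedRing R] (s : Finset ι) {a b c : ι → R} (hb : ∀ i ∈ s, 0 ≤ b i)
    (hba : ∀ i ∈ s, b i ≤ a i) (habc : ∀ i ∈ s, a i - b i ≤ c i * a i) :
    ∏ i ∈ s, a i - ∏ i ∈ s, b i ≤ (∑ i ∈ s, c i) * ∏ i ∈ s, a i := by
  classical
  induction s using Finset.cons_induction with
  | empty => simp
  | cons j s hj ih =>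
    simp only [forall_mem_cons] at hb hba habc
    set A := ∏ i ∈ s, a i
    set B := ∏ i ∈ s, b i
    set C := ∑ i ∈ s, c i
    have hB : 0 ≤ B := prod_nonneg hb.2
    have hBA : B ≤ A := prod_le_prod hb.2 hba.2
    have hAB : A - B ≤ C * A := ih hb.2 hba.2 habc.2
    have hA : 0 ≤ A := hB.trans hBA
    rw [prod_cons, prod_cons, sum_cons]
    calc a j * A - b j * B = (a j - b j) * A + b j * (A - B) := by ring
      _ ≤ c j * a j * A + a j * (C * A) :=
        add_le_add (mul_le_mul_of_nonneg_right habc.1 hA)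
          (mul_le_mul hba.1 hAB (sub_nonneg.2 hBA) (hb.1.trans hba.1))
      _ = (c j + C) * (a j * A) := by ring

theorem Real.exp_sub_one_le_mul_exp (t : ℝ) : Real.exp t - 1 ≤ t * Real.exp t := by
  have h := mul_le_mul_of_nonneg_right (Real.one_sub_le_exp_neg t) (Real.exp_pos t).le
  rwa [← Real.exp_add, neg_add_cancel, Real.exp_zero, sub_mul, one_mul, sub_le_comm] at h

theorem Real.exp_sub_one_sub_le_sq_mul_exp {t : ℝ} (ht : 0 ≤ t) :
    Real.exp t - (1 + t) ≤ t ^ 2 * Real.exp t :=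
  calc Real.exp t - (1 + t) ≤ t * (Real.exp t - 1) := by
        linarith [Real.exp_sub_one_le_mul_exp t]
    _ ≤ t * (t * Real.exp t) := by gcongr; exact Real.exp_sub_one_le_mul_exp t
    _ = t ^ 2 * Real.exp t := by ring

theorem Real.exp_sum_sub_prod_one_add_le {ι : Type*} (s : Finset ι) {x : ι → ℝ}
    (hx : ∀ i ∈ s, 0 ≤ x i) :
    Real.exp (∑ i ∈ s, x i) - ∏ i ∈ s, (1 + x i) ≤
      (∑ i ∈ s, x i ^ 2) * Real.exp (∑ i ∈ s, x i) := by
  rw [Real.exp_sum]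
  exact s.prod_sub_prod_le_sum_mul_prod (fun i hi => by linarith [hx i hi])
    (fun i _ => (add_comm _ _).trans_le (Real.add_one_le_exp _))
    (fun i hi => Real.exp_sub_one_sub_le_sq_mul_exp (hx i hi))

theorem Finset.sum_sq_le_sum_mul_sup' {ι : Type*} (s : Finset ι) (hs : s.Nonempty) {x : ι → ℝ}
    (hx : ∀ i ∈ s, 0 ≤ x i) : ∑ i ∈ s, x i ^ 2 ≤ (∑ i ∈ s, x i) * s.sup' hs x := by
  rw [sum_mul]
  refine sum_le_sum fun i hi => ?_
  rw [sq]
  exact mul_le_mul_of_nonneg_left (le_sup' x hi) (hx i hi)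

/-- Generalized Euler estimate (Proposition `Eulerv2`):
for nonnegative reals `x₁, …, x_M` with sum `x`,
`0 ≤ exp x − ∏ (1 + xᵢ) ≤ x · exp x · max_i xᵢ`. -/
theorem euler_generalized (M : ℕ) (hM : 1 ≤ M) (x : Fin M → ℝ)
    (hx : ∀ i, 0 ≤ x i) :
    0 ≤ Real.exp (∑ i, x i) - ∏ i, (1 + x i) ∧
      Real.exp (∑ i, x i) - ∏ i, (1 + x i) ≤
        (∑ i, x i) * Real.exp (∑ i, x i) *
          Finset.univ.sup' ⟨⟨0, hM⟩, Finset.mem_univ _⟩ x := by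
  have hx' : ∀ i ∈ univ, 0 ≤ x i := fun i _ => hx i
  refine ⟨sub_nonneg.2 (Real.prod_one_add_le_exp_sum univ hx), ?_⟩
  calc Real.exp (∑ i, x i) - ∏ i, (1 + x i)
      ≤ (∑ i, x i ^ 2) * Real.exp (∑ i, x i) := Real.exp_sum_sub_prod_one_add_le univ hx'
    _ ≤ (∑ i, x i) * univ.sup' ⟨⟨0, hM⟩, mem_univ _⟩ x * Real.exp (∑ i, x i) := by
      gcongr
      exact sum_sq_le_sum_mul_sup' univ _ hx'
    _ = _ := by ring
end

section
/- Let A be an algebra over ℝ (or over ℚ), let a_1, …, a_L ∈ A and let D ∈ ℕ. Then ∏_{i=1}^{L} ( Σ_{d=0}^{D} a_i^d / d! ), with factors multiplied in order i = 1,…,L, equals the sum over all weakly increasing tuples 𝐢 = (i_1 ≤ i_2 ≤ ⋯ ≤ i_m) with values in {1,…,L} in which each value occurs at most D times (all lengths m ≥ 0, the empty tuple contributing 1) of (1/𝐢!) · a_{i_1} · a_{i_2} ⋯ a_{i_m}, where 𝐢! denotes the product of the factorials of the multiplicities of the distinct values occurring in 𝐢. -/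
/-!
Expanding the ordered product of the truncated exponentials `∑_{d ≤ D} aᵢ^d / d!` gives one
term `(∏ᵢ cᵢ!)⁻¹ • a₁^{c₁} ⋯ a_L^{c_L}` for each exponent vector `c ∈ {0,…,D}^L`; since the factors
keep their order, no commutativity is needed. The word `a₁^{c₁} ⋯ a_L^{c_L}` is `a_{i₁} ⋯ a_{i_m}`
for the unique weakly increasing tuple `𝐢` in which each `v` occurs `c_v` times, and then
`∏ᵢ cᵢ! = 𝐢!`. So exponent vectors and weakly increasing tuples are in bijection, term by term.
-/

open Finset

theorem List.prod_ofFn_sum {R κ : Type*} [Semiring R] :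
    ∀ {n : ℕ} (s : Fin n → Finset κ) (f : Fin n → κ → R),
      (List.ofFn fun i => ∑ k ∈ s i, f i k).prod
        = ∑ c ∈ Fintype.piFinset s, (List.ofFn fun i => f i (c i)).prod
  | 0, s, f => by simp
  | n + 1, s, f => by
    have hpi : Fintype.piFinset s = (s 0 ×ˢ Fintype.piFinset (Fin.tail s)).map
        (Fin.consEquiv fun _ => κ).toEmbedding := by
      simpa using filter_piFinset_eq_map_consEquiv s (fun _ => True)
    rw [List.ofFn_succ, List.prod_cons, List.prod_ofFn_sum, sum_mul_sum, hpi, sum_map,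
      sum_product]
    simp only [List.ofFn_succ, List.prod_cons, Equiv.coe_toEmbedding, Fin.consEquiv_apply,
      Fin.cons_zero, Fin.cons_succ]
    rfl

theorem List.prod_ofFn_smul {R A : Type*} [CommMonoid R] [Monoid A] [MulAction R A]
    [IsScalarTower R A A] [SMulCommClass R A A] :
    ∀ {n : ℕ} (r : Fin n → R) (x : Fin n → A),
      (List.ofFn fun i => r i • x i).prod = (∏ i, r i) • (List.ofFn x).prod
  | 0, r, x => by simp
  | n + 1, r, x => by
    rw [List.ofFn_succ, List.prod_cons, List.prod_ofFn_smul, smul_mul_smul_comm,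
      ← Fin.prod_univ_succ, ← List.prod_cons, ← List.ofFn_succ]

theorem Finset.card_filter_eq_count_ofFn {α : Type*} [DecidableEq α] {m : ℕ} (f : Fin m → α)
    (v : α) : #{r | f r = v} = (List.ofFn f).count v := by
  rw [← Multiset.coe_count, ← Fin.univ_val_map, Multiset.count_map, card_def, filter_val]
  simp only [eq_comm]

namespace Fin

variable {L : ℕ}

def sortedListOfCounts (c : Fin L → ℕ) : List (Fin L) :=
  (List.finRange L).flatMap fun i => List.replicate (c i) i

theorem count_sortedListOfCounts (c : Fin L → ℕ) (v : Fin L) :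
    (sortedListOfCounts c).count v = c v := by
  simp [sortedListOfCounts, List.count_flatMap, List.count_replicate, ← List.ofFn_eq_map,
    List.sum_ofFn]

theorem length_sortedListOfCounts (c : Fin L → ℕ) :
    (sortedListOfCounts c).length = ∑ i, c i := by
  simp [sortedListOfCounts, List.length_flatMap, ← List.ofFn_eq_map, List.sum_ofFn]

theorem pairwise_sortedListOfCounts (c : Fin L → ℕ) :
    (sortedListOfCounts c).Pairwise (· ≤ ·) := by
  rw [sortedListOfCounts, List.pairwise_flatMap]
  refine ⟨fun i _ => List.pairwise_replicate.2 (Or.inr le_rfl), ?_⟩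
  refine (List.pairwise_le_finRange L).imp fun hij x hx y hy => ?_
  rwa [List.eq_of_mem_replicate hx, List.eq_of_mem_replicate hy]

theorem prod_map_sortedListOfCounts {M : Type*} [Monoid M] (c : Fin L → ℕ) (a : Fin L → M) :
    ((sortedListOfCounts c).map a).prod = (List.ofFn fun i => a i ^ c i).prod := by
  simp [sortedListOfCounts, List.flatMap_def, List.prod_flatten, Function.comp_def,
    List.ofFn_eq_map]

theorem sortedListOfCounts_count {l : List (Fin L)} (hl : l.Pairwise (· ≤ ·)) :
    sortedListOfCounts (l.count ·) = l :=
  List.Perm.eq_of_pairwise' (pairwise_sortedListOfCounts _) hl <|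
    List.perm_iff_count.2 fun v => count_sortedListOfCounts _ v

end Fin

open Fin

theorem prod_truncatedExp_eq_sum_piFinset {K A : Type*} [Semifield K] [Semiring A]
    [Algebra K A] (L D : ℕ) (a : Fin L → A) :
    ((List.finRange L).map fun i => ∑ d ∈ range (D + 1), (d.factorial : K)⁻¹ • a i ^ d).prod
      = ∑ c ∈ Fintype.piFinset fun _ : Fin L => range (D + 1),
          (∏ i, ((c i).factorial : K))⁻¹ • (List.ofFn fun i => a i ^ c i).prod := by
  rw [← List.ofFn_eq_map, List.prod_ofFn_sum]
  refine sum_congr rfl fun c _ => ?_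
  rw [List.prod_ofFn_smul, prod_inv_distrib]

open Classical in
theorem sum_piFinset_eq_sum_monotone {M : Type*} [AddCommMonoid M] (L D : ℕ)
    (F : List (Fin L) → M) :
    ∑ c ∈ Fintype.piFinset (fun _ : Fin L => range (D + 1)), F (sortedListOfCounts c)
      = ∑ m ∈ range (L * D + 1),
          ∑ ι ∈ univ.filter (fun ι : Fin m → Fin L => Monotone ι ∧ ∀ v, #{r | ι r = v} ≤ D),
            F (List.ofFn ι) := by
  have hcount (c : Fin L → ℕ) (v : Fin L) :
      #{r | (sortedListOfCounts c).get r = v} = c v := by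
    rw [card_filter_eq_count_ofFn, List.ofFn_get, count_sortedListOfCounts]
  rw [sum_sigma']
  refine sum_nbij' (fun c => List.equivSigmaTuple (sortedListOfCounts c))
    (fun x v => #{r | x.2 r = v}) ?_ ?_ ?_ ?_ ?_
  · intro c hc
    simp only [Fintype.mem_piFinset, mem_range, Nat.lt_succ_iff] at hc
    have hmono : Monotone (sortedListOfCounts c).get := by
      rw [← List.sortedLE_ofFn_iff, List.ofFn_get, List.sortedLE_iff_pairwise]
      exact pairwise_sortedListOfCounts c
    simp only [List.equivSigmaTuple, Equiv.coe_fn_mk, mem_sigma, mem_range, Nat.lt_succ_iff,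
      mem_filter, mem_univ, true_and, hcount]
    refine ⟨?_, hmono, hc⟩
    calc (sortedListOfCounts c).length = ∑ i, c i := length_sortedListOfCounts c
      _ ≤ ∑ _i : Fin L, D := sum_le_sum fun i _ => hc i
      _ = L * D := by simp
  · rintro ⟨m, ι⟩ hx
    simp only [mem_sigma, mem_filter] at hx
    simpa [Nat.lt_succ_iff] using hx.2.2.2
  · intro c _
    funext v
    exact hcount c v
  · rintro ⟨m, ι⟩ hx
    simp only [mem_sigma, mem_filter] at hx
    rw [← Equiv.eq_symm_apply]
    simp_rw [card_filter_eq_count_ofFn]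
    exact sortedListOfCounts_count
      (List.sortedLE_iff_pairwise.1 (List.sortedLE_ofFn_iff.2 hx.2.2.1))
  · intro c _
    exact congrArg F (List.equivSigmaTuple.symm_apply_apply _).symm

open Classical Finset in
/-- Explicit sum formula for the order-`D` discrete signature
(Proposition `sighigh`, part (a)): in a `ℚ`-algebra,
`∏_{i=1}^{L} (∑_{d=0}^{D} aᵢ^d / d!)` (factors multiplied in order) equals the sum
over all weakly increasing tuples `𝐢` with values in `{1,…,L}` in which every value
occurs at most `D` times, of `(1/𝐢!) · a_{i₁} ⋯ a_{i_m}`, where `𝐢!` is the product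
of the factorials of the multiplicities of the values of `𝐢`. -/
theorem higher_order_signature_sum {A : Type*} [Ring A] [Algebra ℚ A]
    (L D : ℕ) (a : Fin L → A) :
    ((List.finRange L).map (fun i =>
        ∑ d ∈ Finset.range (D + 1), ((Nat.factorial d : ℚ)⁻¹) • a i ^ d)).prod
      = ∑ m ∈ Finset.range (L * D + 1),
          ∑ ι ∈ Finset.univ.filter (fun ι : Fin m → Fin L =>
              Monotone ι ∧
                ∀ v : Fin L, (Finset.univ.filter (fun r => ι r = v)).card ≤ D),
            ((∏ v : Fin L,
                (Nat.factorial ((Finset.univ.filter (fun r => ι r = v)).card) : ℚ))⁻¹) •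
              (List.ofFn (fun r : Fin m => a (ι r))).prod := by
  set F : List (Fin L) → A := fun l => (∏ v, ((l.count v).factorial : ℚ))⁻¹ • (l.map a).prod
  calc _ = ∑ c ∈ Fintype.piFinset (fun _ : Fin L => range (D + 1)),
          F (sortedListOfCounts c) := by
        rw [prod_truncatedExp_eq_sum_piFinset]
        simp only [F, count_sortedListOfCounts, prod_map_sortedListOfCounts]
    _ = _ := sum_piFinset_eq_sum_monotone L D F
    _ = _ := by simp only [F, card_filter_eq_count_ofFn, List.map_ofFn, Function.comp_def]
end

section
/- Let L, L', M ≥ 1 be integers and let G : {1,…,L} × {1,…,L'} → ℝ. Define real numbers A_m(i,j) recursively by A_1(i,j) = G(i,j) and, for 2 ≤ m ≤ M, A_m(i,j) = G(i,j) · ( 1 + Σ_{i' > i} Σ_{j' > j} A_{m−1}(i',j') ), the inner sums ranging over i < i' ≤ L and j < j' ≤ L'. Then 1 + Σ_{i=1}^{L} Σ_{j=1}^{L'} A_M(i,j) = Σ_{m=0}^{M} Σ_{𝐢} Σ_{𝐣} ∏_{r=1}^{m} G(i_r, j_r), where the inner sums range over all strictly increasing tuples 𝐢 = (i_1 < ⋯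 < i_m) in {1,…,L} and 𝐣 = (j_1 < ⋯ < j_m) in {1,…,L'} of the same length m (the m = 0 term contributing 1). -/
/-!
Write `S_M(a, b)` for the truncated kernel in which every entry of the index tuples `𝐢`, `𝐣`
must exceed `a`, resp. `b` (with `a, b ∈ WithBot _`, so that `⊥` imposes no constraint).
Splitting off the first entry of both tuples gives the Horner recursion
`S_{M+1}(a, b) = 1 + ∑_{i > a} ∑_{j > b} G i j * S_M(i, j)`. By induction on `m` this yields
`A m i j = G i j * S_{m-1}(i, j)`, and the recursion at `a = b = ⊥` turns `1 + ∑ A M` into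
`S_M(⊥, ⊥)`, the right-hand side.
-/

open Finset

section

variable {α β R : Type*} [LinearOrder α] [Fintype α] [LinearOrder β] [Fintype β]
  [CommSemiring R]

open Classical in
noncomputable def increasingTuplesAbove (a : WithBot α) (m : ℕ) : Finset (Fin m → α) :=
  {ι | StrictMono ι ∧ ∀ r, a < ι r}

open Classical in
theorem increasingTuplesAbove_bot (m : ℕ) :
    increasingTuplesAbove (⊥ : WithBot α) m =
      univ.filter (fun ι : Fin m → α => StrictMono ι) := by
  simp [increasingTuplesAbove]

theorem increasingTuplesAbove_zero (a : WithBot α) : increasingTuplesAbove a 0 = univ := by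
  ext ι
  simp [increasingTuplesAbove, Subsingleton.strictMono]

theorem cons_mem_increasingTuplesAbove {a : WithBot α} {m : ℕ} {i : α} {ι : Fin m → α} :
    Fin.cons i ι ∈ increasingTuplesAbove a (m + 1) ↔ a < i ∧ ι ∈ increasingTuplesAbove i m := by
  simp only [increasingTuplesAbove, mem_filter_univ, Fin.strictMono_cons, Fin.forall_fin_succ,
    Fin.cons_zero, Fin.cons_succ, WithBot.coe_lt_coe]
  exact ⟨fun ⟨⟨hi, hι⟩, ha, _⟩ => ⟨ha, hι, hi⟩,
    fun ⟨ha, hι, hi⟩ => ⟨⟨hi, hι⟩, ha, fun r => ha.trans (WithBot.coe_lt_coe.2 (hi r))⟩⟩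

open Classical in
theorem sum_increasingTuplesAbove_succ {M : Type*} [AddCommMonoid M] (a : WithBot α) (m : ℕ)
    (f : (Fin (m + 1) → α) → M) :
    ∑ ι ∈ increasingTuplesAbove a (m + 1), f ι =
      ∑ i ∈ {i : α | a < i}, ∑ ι ∈ increasingTuplesAbove i m, f (Fin.cons i ι) := by
  rw [← Fintype.sum_ite_mem, ← (Fin.consEquiv fun _ => α).sum_comp, Fintype.sum_prod_type]
  simp only [Fin.consEquiv, Equiv.coe_fn_mk, cons_mem_increasingTuplesAbove, ite_and,
    sum_ite_irrel, sum_const_zero, Fintype.sum_ite_mem, sum_filter]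

noncomputable def kernelLevel (G : α → β → R) (m : ℕ) (a : WithBot α) (b : WithBot β) : R :=
  ∑ ι ∈ increasingTuplesAbove a m, ∑ κ ∈ increasingTuplesAbove b m, ∏ r, G (ι r) (κ r)

theorem kernelLevel_zero (G : α → β → R) (a : WithBot α) (b : WithBot β) :
    kernelLevel G 0 a b = 1 := by
  simp [kernelLevel, increasingTuplesAbove_zero]

open Classical in
theorem kernelLevel_succ (G : α → β → R) (m : ℕ) (a : WithBot α) (b : WithBot β) :
    kernelLevel G (m + 1) a b =
      ∑ i ∈ {i : α | a < i}, ∑ j ∈ {j : β | b < j}, G i j * kernelLevel G m i j := by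
  simp only [kernelLevel, sum_increasingTuplesAbove_succ, Fin.prod_univ_succ, Fin.cons_zero,
    Fin.cons_succ, mul_sum]
  refine sum_congr rfl fun i _ => ?_
  rw [sum_comm]

noncomputable def truncatedKernel (G : α → β → R) (M : ℕ) (a : WithBot α) (b : WithBot β) : R :=
  ∑ m ∈ range (M + 1), kernelLevel G m a b

open Classical in
theorem truncatedKernel_succ (G : α → β → R) (M : ℕ) (a : WithBot α) (b : WithBot β) :
    truncatedKernel G (M + 1) a b =
      1 + ∑ i ∈ {i : α | a < i}, ∑ j ∈ {j : β | b < j}, G i j * truncatedKernel G M i j := by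
  simp only [truncatedKernel, sum_range_succ' _ (M + 1), kernelLevel_succ, kernelLevel_zero,
    mul_sum]
  rw [add_comm, sum_comm]
  congr 1
  exact sum_congr rfl fun i _ => sum_comm

open Classical in
theorem truncatedKernel_bot_bot (G : α → β → R) (M : ℕ) :
    truncatedKernel G M ⊥ ⊥ =
      ∑ m ∈ range (M + 1),
        ∑ ι ∈ univ.filter (fun ι : Fin m → α => StrictMono ι),
          ∑ κ ∈ univ.filter (fun κ : Fin m → β => StrictMono κ), ∏ r, G (ι r) (κ r) := by
  simp only [truncatedKernel, kernelLevel, increasingTuplesAbove_bot]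

end

open Classical Finset in
theorem horner_recursion_signature_kernel_general (L L' M : ℕ)
    (hM : 1 ≤ M)
    (G : Fin L → Fin L' → ℝ) (A : ℕ → Fin L → Fin L' → ℝ)
    (hA1 : ∀ i j, A 1 i j = G i j)
    (hArec : ∀ m, 2 ≤ m → m ≤ M → ∀ i j,
      A m i j = G i j *
        (1 + ∑ i' ∈ Finset.univ.filter (fun i' => i < i'),
            ∑ j' ∈ Finset.univ.filter (fun j' => j < j'), A (m - 1) i' j')) :
    1 + ∑ i, ∑ j, A M i j
      = ∑ m ∈ Finset.range (M + 1),
          ∑ ι ∈ Finset.univ.filter (fun ι : Fin m → Fin L => StrictMono ι),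
            ∑ κ ∈ Finset.univ.filter (fun κ : Fin m → Fin L' => StrictMono κ),
              ∏ r, G (ι r) (κ r) := by
  have hA : ∀ n, n + 1 ≤ M → ∀ i j, A (n + 1) i j = G i j * truncatedKernel G n i j := by
    intro n
    induction n with
    | zero =>
      intro _ i j
      rw [hA1, truncatedKernel, sum_range_one, kernelLevel_zero, mul_one]
    | succ n ih =>
      intro hn i j
      rw [hArec (n + 1 + 1) (by omega) hn, Nat.add_sub_cancel, truncatedKernel_succ]
      simp only [WithBot.coe_lt_coe, ih (by omega)]
  obtain ⟨N, rfl⟩ : ∃ N, M = N + 1 := ⟨M - 1, by omega⟩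
  rw [← truncatedKernel_bot_bot, truncatedKernel_succ]
  simp only [WithBot.bot_lt_coe, filter_true, hA N le_rfl]

open Classical Finset in
/-- Correctness of the Horner-type dynamic-programming recursion for the truncated
discretized signature kernel (Proposition `sigrecursion`, (ii) ⟺ (iv)):
for any Gram function `G` and `A` defined by `A 1 i j = G i j` and
`A m i j = G i j * (1 + ∑_{i' > i} ∑_{j' > j} A (m-1) i' j')` for `2 ≤ m ≤ M`,
one has `1 + ∑_{i,j} A M i j = ∑_{m=0}^{M} ∑_{𝐢,𝐣 strictly increasing, |𝐢|=|𝐣|=m}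
∏_r G (i_r) (j_r)`. -/
theorem horner_recursion_signature_kernel (L L' M : ℕ)
    (hL : 1 ≤ L) (hL' : 1 ≤ L') (hM : 1 ≤ M)
    (G : Fin L → Fin L' → ℝ) (A : ℕ → Fin L → Fin L' → ℝ)
    (hA1 : ∀ i j, A 1 i j = G i j)
    (hArec : ∀ m, 2 ≤ m → m ≤ M → ∀ i j,
      A m i j = G i j *
        (1 + ∑ i' ∈ Finset.univ.filter (fun i' => i < i'),
            ∑ j' ∈ Finset.univ.filter (fun j' => j < j'), A (m - 1) i' j')) :
    1 + ∑ i, ∑ j, A M i j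
      = ∑ m ∈ Finset.range (M + 1),
          ∑ ι ∈ Finset.univ.filter (fun ι : Fin m → Fin L => StrictMono ι),
            ∑ κ ∈ Finset.univ.filter (fun κ : Fin m → Fin L' => StrictMono κ),
              ∏ r, G (ι r) (κ r) :=
  horner_recursion_signature_kernel_general L L' M hM G A hA1 hArec
end

section
/- Let X be a set, let k : X × X → ℝ be a symmetric positive semidefinite kernel, and let M ∈ ℕ. For finite sequences σ = (σ_0, σ_1, …, σ_L) and τ = (τ_0, τ_1, …, τ_{L'}) in X define the increment kernel ∇k(σ,τ)(i,j) = k(σ_i, τ_j) + k(σ_{i−1}, τ_{j−1}) − k(σ_{i−1}, τ_j) − k(σ_i, τ_{j−1}) for 1 ≤ i ≤ L, 1 ≤ j ≤ L', and define the sequentialized kernel k⁺_M(σ,τ) = Σ_{m=0}^{M} Σ_{𝐢} Σ_{𝐣} ∏_{r=1}^{m} ∇k(σ,τ)(i_r, j_r), summing over all strictly increasing tuples 𝐢 in {1,…,L} and 𝐣 in {1,…,L'} of the same length m (the m = 0 term contributing 1). Then k⁺_M is a symmetric positive semidefinite kernel on the set of finite sequences in X: for every n, every sequences σ^{(1)},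 …, σ^{(n)} and every c_1, …, c_n ∈ ℝ, one has Σ_{a,b=1}^{n} c_a c_b · k⁺_M(σ^{(a)}, σ^{(b)}) ≥ 0. -/
open Classical Finset in
/-- The increment kernel `∇k(σ,τ)(i,j)` for sequences `σ = (σ₀,…,σ_L)`,
`τ = (τ₀,…,τ_{L'})` (here `i : Fin L` corresponds to the index `i+1 ∈ {1,…,L}`). -/
noncomputable def incKernel {X : Type*} (k : X → X → ℝ) {L L' : ℕ}
    (σ : Fin (L + 1) → X) (τ : Fin (L' + 1) → X) (i : Fin L) (j : Fin L') : ℝ :=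
  k (σ i.succ) (τ j.succ) + k (σ i.castSucc) (τ j.castSucc)
    - k (σ i.castSucc) (τ j.succ) - k (σ i.succ) (τ j.castSucc)

open Classical Finset in
/-- The sequentialization `k⁺_M` of a kernel `k`, truncated at level `M`:
`k⁺_M(σ,τ) = ∑_{m=0}^{M} ∑_{𝐢,𝐣 strictly increasing, |𝐢|=|𝐣|=m} ∏_r ∇k(σ,τ)(i_r,j_r)`. -/
noncomputable def seqKernel {X : Type*} (k : X → X → ℝ) (M : ℕ) {L L' : ℕ}
    (σ : Fin (L + 1) → X) (τ : Fin (L' + 1) → X) : ℝ :=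
  ∑ m ∈ Finset.range (M + 1),
    ∑ ι ∈ Finset.univ.filter (fun ι : Fin m → Fin L => StrictMono ι),
      ∑ κ ∈ Finset.univ.filter (fun κ : Fin m → Fin L' => StrictMono κ),
        ∏ r, incKernel k σ τ (ι r) (κ r)

/-!
On finitely many sequences everything is a statement about matrices. The matrix of `k` on all
their points is positive semidefinite, hence so is the matrix of increments `∇k`, which is
`Dᵀ G D` for the difference matrix `D`. At level `m`, the matrix indexed by pairs
(sequence, index tuple) with entries `∏ r, ∇k(i_r, j_r)` is a Hadamard product of reindexed
increment matrices, hence positive semidefinite by the Schur product theorem. Summing its blocks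
over strictly increasing tuples with weights `c_a` gives the level-`m` term of the quadratic form,
and the levels `m ≤ M` add up.
-/

open Finset Matrix

namespace Matrix

open scoped ComplexOrder in
theorem PosSemidef.prod_hadamard {ι ρ 𝕜 : Type*} [Finite ι] [RCLike 𝕜] (s : Finset ρ)
    {A : ρ → Matrix ι ι 𝕜} (hA : ∀ r ∈ s, (A r).PosSemidef) :
    (of fun i j => ∏ r ∈ s, A r i j).PosSemidef := by
  classical
  induction s using Finset.induction_on with
  | empty => simpa [vecMulVec, ← Pi.one_def] using posSemidef_vecMulVec_self_star (1 : ι → 𝕜)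
  | insert r s hr ih =>
    simp only [prod_insert hr]
    exact (hA r (mem_insert_self r s)).hadamard (ih fun r' hr' => hA r' (mem_insert_of_mem hr'))

theorem PosSemidef.increment {P I R : Type*} [Fintype P] [DecidableEq P] [Finite I]
    [Ring R] [PartialOrder R] [StarRing R] {G : Matrix P P R} (hG : G.PosSemidef) (s t : I → P) :
    (of fun i j => G (s i) (s j) + G (t i) (t j) - G (t i) (s j) - G (s i) (t j)).PosSemidef := by
  let D : Matrix P I R := of fun p i => (1 : Matrix P P R) p (s i) - (1 : Matrix P P R) p (t i)
  have hD : (of fun i j => G (s i) (s j) + G (t i) (t j) - G (t i) (s j) - G (s i) (t j)) =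
      Dᴴ * G * D := by
    ext i j
    simp only [D, of_apply, one_apply, mul_apply, conjTranspose_apply, star_sub, apply_ite star,
      star_one, star_zero, sub_mul, mul_sub, ite_mul, mul_ite, one_mul, zero_mul, mul_one, mul_zero,
      sum_sub_distrib, sum_ite_eq', mem_univ, ↓reduceIte]
    abel
  rw [hD]
  exact hG.conjTranspose_mul_mul_same D

theorem PosSemidef.sum_sigma_nonneg {α : Type*} {β : α → Type*} [Fintype α]
    [∀ a, Fintype (β a)] {K : Matrix (Σ a, β a) (Σ a, β a) ℝ} (hK : K.PosSemidef)
    (S : ∀ a, Finset (β a)) (c : α → ℝ) :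
    0 ≤ ∑ a, ∑ b, c a * c b * ∑ x ∈ S a, ∑ y ∈ S b, K ⟨a, x⟩ ⟨b, y⟩ := by
  classical
  refine (hK.dotProduct_mulVec_nonneg fun u => if u.2 ∈ S u.1 then c u.1 else 0).trans_eq ?_
  simp only [dotProduct, mulVec, star_trivial, Fintype.sum_sigma, ite_mul, mul_ite, zero_mul,
    mul_zero, sum_ite_mem, univ_inter]
  simp only [mul_sum]
  refine sum_congr rfl fun a _ => ?_
  rw [sum_comm]
  refine sum_congr rfl fun b _ => sum_congr rfl fun x _ => ?_
  exact sum_congr rfl fun y _ => by ring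

end Matrix

theorem posSemidef_kernelMatrix {X P : Type*} [Fintype P] {k : X → X → ℝ}
    (hsymm : ∀ x y, k x y = k y x)
    (hpsd : ∀ (n : ℕ) (x : Fin n → X) (c : Fin n → ℝ),
      0 ≤ ∑ a, ∑ b, c a * c b * k (x a) (x b))
    (x : P → X) : (of fun p q => k (x p) (x q)).PosSemidef := by
  refine .of_dotProduct_mulVec_nonneg (funext₂ fun p q => hsymm (x q) (x p)) fun v => ?_
  let e := Fintype.equivFin P
  have h := hpsd _ (x ∘ e.symm) (v ∘ e.symm)
  simp only [Function.comp_apply] at h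
  rw [Fintype.sum_equiv e.symm _ (fun p => ∑ q, v p * v q * k (x p) (x q))
    fun a => Fintype.sum_equiv e.symm _ _ fun b => rfl] at h
  refine h.trans_eq (sum_congr rfl fun p _ => ?_)
  simp only [dotProduct, mulVec, star_trivial, of_apply, mul_sum]
  exact sum_congr rfl fun q _ => by ring

theorem incKernel_comm {X : Type*} {k : X → X → ℝ} (hsymm : ∀ x y, k x y = k y x) {L L' : ℕ}
    (σ : Fin (L + 1) → X) (τ : Fin (L' + 1) → X) (i : Fin L) (j : Fin L') :
    incKernel k τ σ j i = incKernel k σ τ i j := by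
  simp only [incKernel, hsymm (τ _)]
  ring

theorem seqKernel_comm {X : Type*} {k : X → X → ℝ} (hsymm : ∀ x y, k x y = k y x) (M : ℕ)
    {L L' : ℕ} (σ : Fin (L + 1) → X) (τ : Fin (L' + 1) → X) :
    seqKernel k M σ τ = seqKernel k M τ σ := by
  unfold seqKernel
  refine sum_congr rfl fun m _ => ?_
  rw [sum_comm]
  simp only [incKernel_comm hsymm σ τ]

-- Classical decidability, as in `seqKernel`, makes `seqKernel_eq_sum_seqKernelLevel` hold by `rfl`.
open Classical in
noncomputable def seqKernelLevel {X : Type*} (k : X → X → ℝ) (m : ℕ) {L L' : ℕ}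
    (σ : Fin (L + 1) → X) (τ : Fin (L' + 1) → X) : ℝ :=
  ∑ ι ∈ univ.filter (fun ι : Fin m → Fin L => StrictMono ι),
    ∑ κ ∈ univ.filter (fun κ : Fin m → Fin L' => StrictMono κ),
      ∏ r, incKernel k σ τ (ι r) (κ r)

theorem seqKernel_eq_sum_seqKernelLevel {X : Type*} (k : X → X → ℝ) (M : ℕ) {L L' : ℕ}
    (σ : Fin (L + 1) → X) (τ : Fin (L' + 1) → X) :
    seqKernel k M σ τ = ∑ m ∈ range (M + 1), seqKernelLevel k m σ τ :=
  rfl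

theorem seqKernelLevel_posSemidef {X α : Type*} [Fintype α] {k : X → X → ℝ}
    (hsymm : ∀ x y, k x y = k y x)
    (hpsd : ∀ (n : ℕ) (x : Fin n → X) (c : Fin n → ℝ),
      0 ≤ ∑ a, ∑ b, c a * c b * k (x a) (x b))
    (m : ℕ) (Len : α → ℕ) (σ : ∀ a, Fin (Len a + 1) → X) (c : α → ℝ) :
    0 ≤ ∑ a, ∑ b, c a * c b * seqKernelLevel k m (σ a) (σ b) := by
  classical
  have hG := posSemidef_kernelMatrix hsymm hpsd fun p : Σ a, Fin (Len a + 1) => σ p.1 p.2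
  have hΔ := hG.increment (fun i : Σ a, Fin (Len a) => ⟨i.1, i.2.succ⟩) fun i => ⟨i.1, i.2.castSucc⟩
  have hK := PosSemidef.prod_hadamard univ
    fun r _ => hΔ.submatrix fun u : Σ a, Fin m → Fin (Len a) => ⟨u.1, u.2 r⟩
  exact hK.sum_sigma_nonneg (fun a => univ.filter StrictMono) c

/-- The truncated sequentialization of a symmetric positive semidefinite kernel is
again a symmetric positive semidefinite kernel on finite sequences. -/
theorem seqKernel_symm_posSemidef {X : Type*} (k : X → X → ℝ)
    (hsymm : ∀ x y, k x y = k y x)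
    (hpsd : ∀ (n : ℕ) (x : Fin n → X) (c : Fin n → ℝ),
      0 ≤ ∑ a, ∑ b, c a * c b * k (x a) (x b))
    (M : ℕ) :
    (∀ (L L' : ℕ) (σ : Fin (L + 1) → X) (τ : Fin (L' + 1) → X),
        seqKernel k M σ τ = seqKernel k M τ σ) ∧
    (∀ (n : ℕ) (Len : Fin n → ℕ) (σ : ∀ a, Fin (Len a + 1) → X) (c : Fin n → ℝ),
        0 ≤ ∑ a, ∑ b, c a * c b * seqKernel k M (σ a) (σ b)) := by
  refine ⟨fun L L' σ τ => seqKernel_comm hsymm M σ τ, fun n Len σ c => ?_⟩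
  calc 0 ≤ ∑ m ∈ range (M + 1), ∑ a, ∑ b, c a * c b * seqKernelLevel k m (σ a) (σ b) :=
        sum_nonneg fun m _ => seqKernelLevel_posSemidef hsymm hpsd m Len σ c
    _ = ∑ a, ∑ b, c a * c b * seqKernel k M (σ a) (σ b) := by
        simp only [seqKernel_eq_sum_seqKernelLevel, mul_sum]
        rw [sum_comm]
        exact sum_congr rfl fun a _ => sum_comm
end

section
/- Let Σ be a set (an alphabet) and λ > 0 a real parameter. For finite strings σ ∈ Σ^L and τ ∈ Σ^{L'} define K_Σ(σ,τ) = Σ_{m≥1} Σ_{𝐢} Σ_{𝐣} λ^{(i_m − i_1 + 1) + (j_m − j_1 + 1)} · ∏_{r=1}^{m} 𝟙(σ_{i_r} = τ_{j_r}), where the sums range over all pairs of nonempty strictly increasing tuples 𝐢 = (i_1 < ⋯ < i_m) in {1,…,L} and 𝐣 = (j_1 < ⋯ < j_m) in {1,…,L'} of the same length m, and 𝟙(a = b) is 1 if a = b and 0 otherwise. Then K_Σ is a symmetric positive semidefinite kernel on the set of finite strings over Σ: for every n, every strings σ^{(1)}, …, σ^{(n)} and every c_1, …, c_n ∈ ℝ,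 one has Σ_{a,b=1}^{n} c_a c_b · K_Σ(σ^{(a)}, σ^{(b)}) ≥ 0. -/
open Classical Finset in
/-- The string kernel of Lodhi et al. with decay parameter `lam`:
`K_Σ(σ,τ) = ∑_{m≥1} ∑_{𝐢,𝐣 strictly increasing nonempty tuples of equal length m}
lam^{d(𝐢)+d(𝐣)} ∏_r 𝟙(σ_{i_r} = τ_{j_r})` with `d(𝐢) = i_m − i₁ + 1`.
(Here tuples of length `m+1` range over `m ∈ {0,…,min L L' − 1}`.) -/
noncomputable def stringKernel {Alph : Type*} (lam : ℝ) {L L' : ℕ}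
    (σ : Fin L → Alph) (τ : Fin L' → Alph) : ℝ :=
  ∑ m ∈ Finset.range (min L L'),
    ∑ ι ∈ Finset.univ.filter (fun ι : Fin (m + 1) → Fin L => StrictMono ι),
      ∑ κ ∈ Finset.univ.filter (fun κ : Fin (m + 1) → Fin L' => StrictMono κ),
        lam ^ (((ι (Fin.last m)).val - (ι 0).val + 1)
                + ((κ (Fin.last m)).val - (κ 0).val + 1))
          * ∏ r, (if σ (ι r) = τ (κ r) then (1 : ℝ) else 0)

/-!
Grouping the matched pairs `(𝐢, 𝐣)` by the common word `w = σ ∘ 𝐢 = τ ∘ 𝐣` they read off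
writes the string kernel as `∑_{m, w} φ_m(σ)(w) φ_m(τ)(w)`, where the feature
`φ_m(σ)(w) = ∑_{σ ∘ 𝐢 = w} λ^{d(𝐢)}` weighs the occurrences of `w` as a subsequence of `σ`.
A kernel given by an explicit feature map is symmetric and positive semidefinite.
-/

open Classical Finset

theorem sum_sum_mul_mul_sum_mul_nonneg {ι W : Type*} (s : Finset ι) (t : Finset W)
    (c : ι → ℝ) (φ : ι → W → ℝ) :
    0 ≤ ∑ a ∈ s, ∑ b ∈ s, c a * c b * ∑ w ∈ t, φ a w * φ b w := by
  calc
    0 ≤ ∑ w ∈ t, (∑ a ∈ s, c a * φ a w) ^ 2 := sum_nonneg fun w _ => sq_nonneg _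
    _ = ∑ w ∈ t, ∑ a ∈ s, ∑ b ∈ s, c a * c b * (φ a w * φ b w) := by
      simp only [sq, sum_mul_sum]
      exact sum_congr rfl fun w _ => sum_congr rfl fun a _ => sum_congr rfl fun b _ => by ring
    _ = ∑ a ∈ s, ∑ b ∈ s, c a * c b * ∑ w ∈ t, φ a w * φ b w := by
      simp only [mul_sum]
      rw [sum_comm]
      exact sum_congr rfl fun a _ => sum_comm

theorem sum_boole_mul_boole {X : Type*} [DecidableEq X] {S : Finset X} {x y : X} (hx : x ∈ S) :
    ∑ w ∈ S, (if x = w then (1 : ℝ) else 0) * (if y = w then 1 else 0) =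
      if x = y then 1 else 0 := by
  simp only [boole_mul, sum_ite_eq, hx, if_true, eq_comm]

theorem sum_sum_mul_boole_eq_sum_mul {I J X : Type*} [DecidableEq X] (s : Finset I) (t : Finset J)
    (u : I → ℝ) (v : J → ℝ) (x : I → X) (y : J → X) (S : Finset X) (hx : ∀ i, x i ∈ S) :
    ∑ i ∈ s, ∑ j ∈ t, u i * v j * (if x i = y j then 1 else 0) =
      ∑ w ∈ S, (∑ i ∈ s, u i * (if x i = w then 1 else 0)) *
        (∑ j ∈ t, v j * (if y j = w then 1 else 0)) := by
  simp only [sum_mul_sum]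
  rw [sum_comm (s := S)]
  refine sum_congr rfl fun i _ => ?_
  rw [sum_comm (s := S)]
  refine sum_congr rfl fun j _ => ?_
  rw [← sum_boole_mul_boole (hx i), mul_sum]
  exact sum_congr rfl fun w _ => by ring

theorem filter_strictMono_eq_empty {m L : ℕ} (h : L ≤ m) :
    univ.filter (fun ι : Fin (m + 1) → Fin L => StrictMono ι) = ∅ := by
  refine filter_false_of_mem fun ι _ hι => ?_
  have := Fintype.card_le_of_injective ι hι.injective
  simp only [Fintype.card_fin] at this
  omega

section Features

variable {Alph : Type*} (lam : ℝ)

noncomputable def subseqFeature {L : ℕ} (σ : Fin L → Alph) (m : ℕ) (w : Fin (m + 1) → Alph) :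
    ℝ :=
  ∑ ι ∈ univ.filter (fun ι : Fin (m + 1) → Fin L => StrictMono ι),
    lam ^ ((ι (Fin.last m)).val - (ι 0).val + 1) * (if σ ∘ ι = w then 1 else 0)

theorem stringKernel_eq_sum_subseqFeature {L L' : ℕ} (σ : Fin L → Alph) (τ : Fin L' → Alph)
    {N : ℕ} (hN : min L L' ≤ N) (A : Finset Alph) (hσ : ∀ i, σ i ∈ A) :
    stringKernel lam σ τ = ∑ m ∈ range N, ∑ w ∈ Fintype.piFinset (fun _ : Fin (m + 1) => A),
      subseqFeature lam σ m w * subseqFeature lam τ m w := by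
  refine sum_subset (range_subset_range.2 hN) (fun m _ hm => ?_) |>.trans
    (sum_congr rfl fun m _ => ?_)
  · rcases min_le_iff.1 (not_lt.1 (mt mem_range.2 hm)) with h | h
    · rw [filter_strictMono_eq_empty h, sum_empty]
    · exact sum_eq_zero fun ι _ => by rw [filter_strictMono_eq_empty h, sum_empty]
  · have hprod : ∀ (ι : Fin (m + 1) → Fin L) (κ : Fin (m + 1) → Fin L'),
        ∏ r, (if σ (ι r) = τ (κ r) then (1 : ℝ) else 0) = if σ ∘ ι = τ ∘ κ then 1 else 0 := by
      intro ι κ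
      simp only [prod_boole, mem_univ, true_implies, funext_iff, Function.comp_apply]
    simp only [hprod]
    refine (sum_congr rfl fun ι _ => sum_congr rfl fun κ _ => by rw [pow_add]).trans ?_
    exact sum_sum_mul_boole_eq_sum_mul _ _ _ _ (σ ∘ ·) (τ ∘ ·) _
      fun ι => Fintype.mem_piFinset.2 fun r => hσ (ι r)

theorem stringKernel_comm {L L' : ℕ} (σ : Fin L → Alph) (τ : Fin L' → Alph) :
    stringKernel lam σ τ = stringKernel lam τ σ := by
  let A := univ.image σ ∪ univ.image τ
  rw [stringKernel_eq_sum_subseqFeature lam σ τ le_rfl A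
      fun i => mem_union_left _ (mem_image_of_mem σ (mem_univ i)),
    stringKernel_eq_sum_subseqFeature lam τ σ (min_comm L' L).le A
      fun j => mem_union_right _ (mem_image_of_mem τ (mem_univ j))]
  simp only [mul_comm]

theorem stringKernel_quadratic_form_nonneg {n : ℕ} {Len : Fin n → ℕ}
    (σ : ∀ a, Fin (Len a) → Alph) (c : Fin n → ℝ) :
    0 ≤ ∑ a, ∑ b, c a * c b * stringKernel lam (σ a) (σ b) := by
  let A := univ.biUnion fun a => univ.image (σ a)
  let words := (range (univ.sup Len)).sigma fun m => Fintype.piFinset fun _ : Fin (m + 1) => A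
  have hfeature : ∀ a b, stringKernel lam (σ a) (σ b) =
      ∑ x ∈ words, subseqFeature lam (σ a) x.1 x.2 * subseqFeature lam (σ b) x.1 x.2 := by
    intro a b
    rw [sum_sigma, stringKernel_eq_sum_subseqFeature lam (σ a) (σ b)
      ((min_le_left _ _).trans (le_sup (mem_univ a))) A
      fun i => mem_biUnion.2 ⟨a, mem_univ a, mem_image_of_mem _ (mem_univ i)⟩]
  simp only [hfeature]
  exact sum_sum_mul_mul_sum_mul_nonneg _ _ c _

end Features

theorem stringKernel_symm_posSemidef_general {Alph : Type*} (lam : ℝ) :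
    (∀ (L L' : ℕ) (σ : Fin L → Alph) (τ : Fin L' → Alph),
        stringKernel lam σ τ = stringKernel lam τ σ) ∧
    (∀ (n : ℕ) (Len : Fin n → ℕ) (σ : ∀ a, Fin (Len a) → Alph) (c : Fin n → ℝ),
        0 ≤ ∑ a, ∑ b, c a * c b * stringKernel lam (σ a) (σ b)) :=
  ⟨fun _ _ => stringKernel_comm lam, fun _ _ => stringKernel_quadratic_form_nonneg lam⟩

/-- The string kernel is a symmetric positive semidefinite kernel on finite strings. -/
theorem stringKernel_symm_posSemidef {Alph : Type*} (lam : ℝ) (hlam : 0 < lam) :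
    (∀ (L L' : ℕ) (σ : Fin L → Alph) (τ : Fin L' → Alph),
        stringKernel lam σ τ = stringKernel lam τ σ) ∧
    (∀ (n : ℕ) (Len : Fin n → ℕ) (σ : ∀ a, Fin (Len a) → Alph) (c : Fin n → ℝ),
        0 ≤ ∑ a, ∑ b, c a * c b * stringKernel lam (σ a) (σ b)) :=
  stringKernel_symm_posSemidef_general lam
end

section
/- Let D ≥ 1 be an integer, let L, L' be positive integers, and let g : ℕ × ℕ → ℝ. For integers m ≥ 1, 1 ≤ d, d' ≤ D, 1 ≤ i ≤ L and 1 ≤ j ≤ L', define A[m|d,d'|i,j] as the sum of (1/(𝐢!·𝐣!)) · ∏_{r=1}^{ℓ} g(i_r, j_r) over all pairs (𝐢, 𝐣) of weakly increasing tuples of the same length ℓ with 1 ≤ ℓ ≤ m, where 𝐢 has values in {1,…,L} with each value occurring at most D times and begins with exactly d copies of i (i.e. i_1 = ⋯ = i_d = i and, if ℓ > d, i_{d+1} ≠ i), and 𝐣 has values in {1,…,L'} with each value occurring at most D times and begins with exactly d' copies of j. Then for all m ≥ 2 the following recursion equalities hold: (1) A[m|1,1|i,j] = g(i,j) · ( 1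 + Σ_{i' > i} Σ_{j' > j} Σ_{d=1}^{D} Σ_{d'=1}^{D} A[m−1|d,d'|i',j'] ); (2) for d ≥ 2: A[m|d,1|i,j] = (1/d) · g(i,j) · Σ_{j' > j} Σ_{κ=1}^{D} A[m−1|d−1,κ|i,j']; (3) for d' ≥ 2: A[m|1,d'|i,j] = (1/d') · g(i,j) · Σ_{i' > i} Σ_{κ=1}^{D} A[m−1|κ,d'−1|i',j]; (4) for d, d' ≥ 2: A[m|d,d'|i,j] = (1/(d·d')) · g(i,j) · A[m−1|d−1,d'−1|i,j]. -/
open Classical Finset in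
/-- The multiplicity factorial `𝐢!` of a tuple `ι`: the product of the factorials
of the numbers of occurrences of the values of `ι`. -/
noncomputable def tupleFact {ℓ L : ℕ} (ι : Fin ℓ → Fin L) : ℕ :=
  ∏ v : Fin L, Nat.factorial ((Finset.univ.filter (fun r => ι r = v)).card)

open Classical Finset in
/-- `ValidTuple D ι d i` says: `ι` is weakly increasing, every value occurs at most
`D` times, and `ι` begins with exactly `d` copies of `i` (i.e. `d ≤ ℓ`, the first `d`
entries equal `i`, and the `(d+1)`-st entry, if present, differs from `i`). -/
def ValidTuple (D : ℕ) {ℓ L : ℕ} (ι : Fin ℓ → Fin L) (d : ℕ) (i : Fin L) : Prop :=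
  Monotone ι ∧ (∀ v : Fin L, (Finset.univ.filter (fun r => ι r = v)).card ≤ D) ∧
    d ≤ ℓ ∧ (∀ r : Fin ℓ, r.val < d → ι r = i) ∧ ∀ h : d < ℓ, ι ⟨d, h⟩ ≠ i

open Classical Finset in
/-- The dynamic-programming array `A[m|d,d'|i,j]` for the higher order sequential
kernel: the sum of `(1/(𝐢!·𝐣!)) ∏_r g(i_r, j_r)` over all pairs `(𝐢,𝐣)` of weakly
increasing tuples of equal length `ℓ ∈ {1,…,m}`, with each value occurring at most
`D` times, `𝐢` beginning with exactly `d` copies of `i` and `𝐣` with exactly `d'`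
copies of `j`. -/
noncomputable def dpArray (D : ℕ) {L L' : ℕ} (g : Fin L → Fin L' → ℝ)
    (m d d' : ℕ) (i : Fin L) (j : Fin L') : ℝ :=
  ∑ ℓ ∈ Finset.Icc 1 m,
    ∑ p ∈ Finset.univ.filter
        (fun p : (Fin ℓ → Fin L) × (Fin ℓ → Fin L') =>
          ValidTuple D p.1 d i ∧ ValidTuple D p.2 d' j),
      ((tupleFact p.1 : ℝ) * (tupleFact p.2 : ℝ))⁻¹ * ∏ r, g (p.1 r) (p.2 r)

/-!
A weakly increasing tuple of length `ℓ + 1` that begins with exactly `d` copies of `i` is `i`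
followed by a weakly increasing tuple of length `ℓ`; the latter begins with exactly `d - 1`
copies of `i` if `d ≥ 2`, and with a run of length `κ ∈ [1, D]` of some value `i' > i` if
`d = 1`, and these alternatives are mutually exclusive. Removing the leading `i` divides `𝐢!`
by `d`, since the multiplicity of `i` drops from `d` to `d - 1`, and removes the factor
`g(i, j)` from the product. So the length-`(ℓ + 1)` part of `A[m|d,d'|i,j]` is
`(d d')⁻¹ g(i, j)` times a sum of length-`ℓ` parts, and summing over `ℓ` gives the recursion;
the tuples of length one contribute the constant `g(i, j)` exactly when `d = d' = 1`.
-/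

open Classical Finset

section Count

variable {α : Type*} [DecidableEq α] {n : ℕ}

def tupleCount {ℓ : ℕ} (ι : Fin ℓ → α) (v : α) : ℕ :=
  (univ.filter (fun r => ι r = v)).card

lemma tupleCount_le (ι : Fin n → α) (v : α) : tupleCount ι v ≤ n :=
  (card_filter_le _ _).trans_eq (card_fin n)

lemma tupleCount_cons (a : α) (ι : Fin n → α) (v : α) :
    tupleCount (Fin.cons a ι : Fin (n + 1) → α) v =
      (if a = v then 1 else 0) + tupleCount ι v := by
  simp only [tupleCount, card_filter, Fin.sum_univ_succ, Fin.cons_zero, Fin.cons_succ]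

lemma forall_tupleCount_cons_le_iff {D : ℕ} (a : α) (ι : Fin n → α) :
    (∀ v, tupleCount (Fin.cons a ι : Fin (n + 1) → α) v ≤ D) ↔
      tupleCount ι a + 1 ≤ D ∧ ∀ v, tupleCount ι v ≤ D := by
  simp only [tupleCount_cons]
  refine ⟨fun h => ⟨by simpa [add_comm] using h a, fun v => (Nat.le_add_left _ _).trans (h v)⟩,
    fun ⟨ha, h⟩ v => ?_⟩
  split_ifs with hav
  · subst hav; omega
  · simpa using h v

lemma Fin.mem_iff_val_lt_card_of_isLowerSet {s : Finset (Fin n)}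
    (hs : IsLowerSet (s : Set (Fin n))) (r : Fin n) : r ∈ s ↔ (r : ℕ) < s.card := by
  constructor
  · intro hr
    have := card_le_card fun x hx => hs (mem_Iic.mp hx) hr
    rw [Fin.card_Iic] at this
    omega
  · intro hr
    by_contra hrs
    have := card_le_card fun x (hx : x ∈ s) =>
      mem_Iio.mpr (lt_of_not_ge fun hrx => hrs (hs hrx hx))
    rw [Fin.card_Iio] at this
    omega

variable [PartialOrder α] {ι : Fin (n + 1) → α}

lemma Monotone.apply_eq_apply_zero_iff (hι : Monotone ι) (r : Fin (n + 1)) :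
    ι r = ι 0 ↔ (r : ℕ) < tupleCount ι (ι 0) := by
  have hs : IsLowerSet ((univ.filter fun r => ι r = ι 0 : Finset _) : Set (Fin (n + 1))) :=
    fun a b hba ha => by
      simp only [coe_filter, mem_univ, true_and, Set.mem_ofPred_eq] at ha ⊢
      exact le_antisymm ((hι hba).trans_eq ha) (hι (Fin.zero_le b))
  have := Fin.mem_iff_val_lt_card_of_isLowerSet hs r
  rwa [mem_filter, and_iff_right (mem_univ r)] at this

lemma Monotone.tupleCount_eq_zero_iff (hι : Monotone ι) {a : α} (ha : a ≤ ι 0) :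
    tupleCount ι a = 0 ↔ a ≠ ι 0 := by
  rw [tupleCount, card_eq_zero, filter_eq_empty_iff]
  refine ⟨fun h h0 => h (mem_univ 0) h0.symm, fun hne r _ hr => hne ?_⟩
  exact le_antisymm ha ((hι (Fin.zero_le r)).trans_eq hr)

end Count

section Tuples

variable {D n L : ℕ}

lemma tupleFact_cons (a : Fin L) (ι : Fin n → Fin L) :
    tupleFact (Fin.cons a ι : Fin (n + 1) → Fin L) = (tupleCount ι a + 1) * tupleFact ι := by
  change ∏ v, (tupleCount (Fin.cons a ι : Fin (n + 1) → Fin L) v).factorial =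
    _ * ∏ v, (tupleCount ι v).factorial
  simp only [tupleCount_cons]
  rw [← mul_prod_erase _ _ (mem_univ a), ← mul_prod_erase _ (fun v => (tupleCount ι v).factorial)
    (mem_univ a), ← mul_assoc, if_pos rfl, add_comm 1, Nat.factorial_succ]
  congr 1
  exact prod_congr rfl fun v hv => by rw [if_neg (ne_of_mem_erase hv).symm, zero_add]

lemma tupleFact_eq_one (ι : Fin 1 → Fin L) : tupleFact ι = 1 :=
  prod_eq_one fun v _ => Nat.factorial_eq_one.mpr (tupleCount_le ι v)

lemma validTuple_iff {d : ℕ} {ι : Fin (n + 1) → Fin L} {i : Fin L} (hd : 1 ≤ d) :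
    ValidTuple D ι d i ↔
      Monotone ι ∧ (∀ v, tupleCount ι v ≤ D) ∧ ι 0 = i ∧ tupleCount ι i = d := by
  refine and_congr_right fun hι => and_congr_right fun _ => ?_
  have key := hι.apply_eq_apply_zero_iff
  constructor
  · rintro ⟨hdn, hlead, hnext⟩
    obtain rfl : ι 0 = i := hlead 0 (by simp only [Fin.val_zero]; omega)
    refine ⟨rfl, le_antisymm ?_ ?_⟩
    · by_contra! hlt
      exact hnext (hlt.trans_le (tupleCount_le ι _)) ((key _).mpr hlt)
    · have := (key ⟨d - 1, by omega⟩).mp (hlead _ (by simp only; omega))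
      simp only at this
      omega
  · rintro ⟨rfl, rfl⟩
    exact ⟨tupleCount_le _ _, fun r hr => (key r).mpr hr,
      fun h heq => lt_irrefl _ ((key ⟨_, h⟩).mp heq)⟩

lemma ValidTuple.mk_eq_head {d : ℕ} {ι : Fin (n + 1) → Fin L} {i : Fin L}
    (h : ValidTuple D ι d i) (hd : 1 ≤ d) : (i, d) = (ι 0, tupleCount ι (ι 0)) := by
  obtain ⟨-, -, rfl, rfl⟩ := (validTuple_iff hd).mp h
  rfl

lemma validTuple_cons_iff {d : ℕ} {i : Fin L} {ι : Fin (n + 1) → Fin L} (hd : 1 ≤ d)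
    (hdD : d ≤ D) :
    ValidTuple D (Fin.cons i ι : Fin (n + 2) → Fin L) d i ↔
      Monotone ι ∧ (∀ v, tupleCount ι v ≤ D) ∧ i ≤ ι 0 ∧ tupleCount ι i + 1 = d := by
  rw [validTuple_iff hd, show Monotone (Fin.cons i ι : Fin (n + 2) → Fin L) ↔ _ from
    monotone_vecCons, forall_tupleCount_cons_le_iff, tupleCount_cons, Fin.cons_zero, if_pos rfl]
  constructor
  · rintro ⟨⟨hi, hι⟩, ⟨-, hbound⟩, -, hc⟩
    exact ⟨hι, hbound, hi, by omega⟩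
  · rintro ⟨hι, hbound, hi, hc⟩
    exact ⟨⟨hi, hι⟩, ⟨by omega, hbound⟩, rfl, by omega⟩

/-- The possible first values and leading run lengths of the tail of a tuple that begins
with exactly `d` copies of `i`. -/
def tailHeads (D d : ℕ) {L : ℕ} (i : Fin L) : Finset (Fin L × ℕ) :=
  if d = 1 then (univ.filter fun i' => i < i') ×ˢ Icc 1 D else {(i, d - 1)}

lemma tailHeads_one (i : Fin L) :
    tailHeads D 1 i = (univ.filter fun i' => i < i') ×ˢ Icc 1 D :=
  if_pos rfl

lemma tailHeads_of_two_le {d : ℕ} (hd : 2 ≤ d) (i : Fin L) : tailHeads D d i = {(i, d - 1)} :=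
  if_neg (by omega)

lemma one_le_of_mem_tailHeads {d : ℕ} {i : Fin L} {q : Fin L × ℕ} (hd : 1 ≤ d)
    (hq : q ∈ tailHeads D d i) : 1 ≤ q.2 := by
  rcases hd.eq_or_lt with rfl | hd
  · rw [tailHeads_one, mem_product, mem_Icc] at hq
    exact hq.2.1
  · rw [tailHeads_of_two_le hd, mem_singleton] at hq
    subst hq
    simp only
    omega

lemma validTuple_cons_iff_exists_tailHeads {d : ℕ} {i : Fin L} {ι : Fin (n + 1) → Fin L}
    (hd : 1 ≤ d) (hdD : d ≤ D) :
    ValidTuple D (Fin.cons i ι : Fin (n + 2) → Fin L) d i ↔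
      ∃ q ∈ tailHeads D d i, ValidTuple D ι q.2 q.1 := by
  rw [validTuple_cons_iff hd hdD]
  rcases hd.eq_or_lt with rfl | hd
  · simp only [tailHeads_one, mem_product, mem_filter, mem_univ, true_and, mem_Icc,
      Prod.exists]
    constructor
    · rintro ⟨hι, hbound, hi, hc⟩
      have hhead : tupleCount ι (ι 0) ≠ 0 := fun h => (hι.tupleCount_eq_zero_iff le_rfl).mp h rfl
      refine ⟨ι 0, _, ⟨?_, Nat.one_le_iff_ne_zero.mpr hhead, hbound _⟩,
        (validTuple_iff (Nat.one_le_iff_ne_zero.mpr hhead)).mpr ⟨hι, hbound, rfl, rfl⟩⟩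
      exact hi.lt_of_ne ((hι.tupleCount_eq_zero_iff hi).mp (by omega))
    · rintro ⟨_, k, ⟨hi, hk, -⟩, hv⟩
      obtain ⟨hι, hbound, rfl, rfl⟩ := (validTuple_iff hk).mp hv
      exact ⟨hι, hbound, hi.le, by rw [(hι.tupleCount_eq_zero_iff hi.le).mpr hi.ne]⟩
  · simp only [tailHeads_of_two_le hd, mem_singleton, exists_eq_left,
        validTuple_iff (show 1 ≤ d - 1 by omega)]
    constructor
    · rintro ⟨hι, hbound, hi, hc⟩
      have hi0 : i = ι 0 := by
        by_contra h
        have := (hι.tupleCount_eq_zero_iff hi).mpr h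
        omega
      exact ⟨hι, hbound, hi0.symm, by omega⟩
    · rintro ⟨hι, hbound, rfl, hc⟩
      exact ⟨hι, hbound, le_rfl, by omega⟩

noncomputable def validTuples (D ℓ d : ℕ) {L : ℕ} (i : Fin L) : Finset (Fin ℓ → Fin L) :=
  univ.filter fun ι => ValidTuple D ι d i

lemma validTuples_one {d : ℕ} (hD : 1 ≤ D) (hd : 1 ≤ d) (i : Fin L) :
    validTuples D 1 d i = if d = 1 then {fun _ => i} else ∅ := by
  ext ι
  simp only [validTuples, mem_filter, mem_univ, true_and, validTuple_iff (n := 0) hd]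
  have hmono : Monotone ι := Subsingleton.monotone ι
  have hhead : tupleCount ι (ι 0) = 1 := le_antisymm (tupleCount_le ι _)
    (Nat.one_le_iff_ne_zero.mpr fun h => (hmono.tupleCount_eq_zero_iff le_rfl).mp h rfl)
  split_ifs with h
  · subst h
    rw [mem_singleton, funext_iff, Fin.forall_fin_one]
    constructor
    · exact fun ⟨_, _, h0, _⟩ => h0
    · rintro rfl
      exact ⟨hmono, fun v => (tupleCount_le ι v).trans hD, rfl, hhead⟩
  · simp only [notMem_empty, iff_false]
    rintro ⟨-, -, rfl, rfl⟩
    exact h hhead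

lemma validTuples_succ_succ_eq_biUnion {d : ℕ} (hd : 1 ≤ d) (hdD : d ≤ D)
    (i : Fin L) :
    validTuples D (n + 2) d i = (tailHeads D d i).biUnion
      fun q => (validTuples D (n + 1) q.2 q.1).image (Fin.cons i) := by
  ext ι
  simp only [validTuples, mem_filter, mem_univ, true_and, mem_biUnion, mem_image]
  constructor
  · intro h
    have h0 : ι 0 = i := h.2.2.2.1 0 (by simp only [Fin.val_zero]; omega)
    rw [← Fin.cons_self_tail ι, h0, validTuple_cons_iff_exists_tailHeads hd hdD] at h
    obtain ⟨q, hq, hv⟩ := h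
    exact ⟨q, hq, Fin.tail ι, hv, by rw [← h0, Fin.cons_self_tail]⟩
  · rintro ⟨q, hq, ι, hv, rfl⟩
    exact (validTuple_cons_iff_exists_tailHeads hd hdD).mpr ⟨q, hq, hv⟩

lemma sum_validTuples_succ_succ {M : Type*} [AddCommMonoid M] {d : ℕ}
    (hd : 1 ≤ d) (hdD : d ≤ D) (i : Fin L) (f : (Fin (n + 2) → Fin L) → M) :
    ∑ ι ∈ validTuples D (n + 2) d i, f ι =
      ∑ q ∈ tailHeads D d i, ∑ ι ∈ validTuples D (n + 1) q.2 q.1, f (Fin.cons i ι) := by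
  rw [validTuples_succ_succ_eq_biUnion hd hdD, sum_biUnion]
  · exact sum_congr rfl fun q _ =>
      sum_image fun _ _ _ _ h => Fin.cons_right_injective (α := fun _ => Fin L) i h
  · intro q hq q' hq' hne
    refine disjoint_left.mpr ?_
    simp only [validTuples, mem_image, mem_filter, mem_univ, true_and]
    rintro _ ⟨ι, hv, rfl⟩ ⟨ι', hv', heq⟩
    obtain rfl := Fin.cons_right_injective (α := fun _ => Fin L) i heq
    exact hne (Prod.ext_iff.mpr (Prod.ext_iff.mp
      ((hv.mk_eq_head (one_le_of_mem_tailHeads hd hq)).trans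
        (hv'.mk_eq_head (one_le_of_mem_tailHeads hd hq')).symm)))

lemma tupleCount_add_one_of_mem_tailHeads {d : ℕ} (hd : 1 ≤ d) (hdD : d ≤ D)
    {i : Fin L} {q : Fin L × ℕ} (hq : q ∈ tailHeads D d i) {ι : Fin (n + 1) → Fin L}
    (hι : ι ∈ validTuples D (n + 1) q.2 q.1) : tupleCount ι i + 1 = d :=
  ((validTuple_cons_iff hd hdD).mp ((validTuple_cons_iff_exists_tailHeads hd hdD).mpr
    ⟨q, hq, (mem_filter.mp hι).2⟩)).2.2.2

section Layers

variable {L' : ℕ} (g : Fin L → Fin L' → ℝ)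

noncomputable def tupleWeight {ℓ : ℕ} (ι : Fin ℓ → Fin L) (κ : Fin ℓ → Fin L') : ℝ :=
  ((tupleFact ι : ℝ) * (tupleFact κ : ℝ))⁻¹ * ∏ r, g (ι r) (κ r)

lemma tupleWeight_cons (a : Fin L) (b : Fin L') (ι : Fin n → Fin L) (κ : Fin n → Fin L') :
    tupleWeight g (Fin.cons a ι : Fin (n + 1) → Fin L) (Fin.cons b κ : Fin (n + 1) → Fin L') =
      (((tupleCount ι a + 1 : ℕ) : ℝ) * ((tupleCount κ b + 1 : ℕ) : ℝ))⁻¹ * g a b *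
        tupleWeight g ι κ := by
  simp only [tupleWeight, tupleFact_cons, Fin.prod_univ_succ, Fin.cons_zero, Fin.cons_succ,
    Nat.cast_mul]
  ring

noncomputable def dpLayer (D ℓ d d' : ℕ) (i : Fin L) (j : Fin L') : ℝ :=
  ∑ ι ∈ validTuples D ℓ d i, ∑ κ ∈ validTuples D ℓ d' j, tupleWeight g ι κ

lemma dpArray_eq_sum_dpLayer (m d d' : ℕ) (i : Fin L) (j : Fin L') :
    dpArray D g m d d' i j = ∑ k ∈ range m, dpLayer g D (k + 1) d d' i j := by
  rw [dpArray, ← Ico_add_one_right_eq_Icc, ← zero_add 1, ← sum_Ico_add', ← range_eq_Ico]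
  refine sum_congr rfl fun k _ => ?_
  rw [← univ_product_univ, filter_product (fun ι => ValidTuple D ι d i)
    (fun κ => ValidTuple D κ d' j), sum_product]
  rfl

lemma dpLayer_one (hD : 1 ≤ D) {d d' : ℕ} (hd : 1 ≤ d) (hd' : 1 ≤ d') (i : Fin L) (j : Fin L') :
    dpLayer g D 1 d d' i j = if d = 1 ∧ d' = 1 then g i j else 0 := by
  rw [dpLayer, validTuples_one hD hd, validTuples_one hD hd']
  split_ifs with h h' h' <;> simp_all [tupleWeight, tupleFact_eq_one]

lemma dpLayer_succ_succ {d d' : ℕ} (hd : 1 ≤ d) (hdD : d ≤ D) (hd' : 1 ≤ d') (hd'D : d' ≤ D)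
    (i : Fin L) (j : Fin L') :
    dpLayer g D (n + 2) d d' i j = ((d : ℝ) * (d' : ℝ))⁻¹ * g i j *
      ∑ q ∈ tailHeads D d i, ∑ q' ∈ tailHeads D d' j, dpLayer g D (n + 1) q.2 q'.2 q.1 q'.1 := by
  simp only [dpLayer, mul_sum]
  rw [sum_validTuples_succ_succ hd hdD]
  simp_rw [sum_validTuples_succ_succ hd' hd'D]
  refine sum_congr rfl fun q hq => ?_
  rw [sum_comm]
  refine sum_congr rfl fun q' hq' => sum_congr rfl fun ι hι => sum_congr rfl fun κ hκ => ?_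
  rw [tupleWeight_cons, tupleCount_add_one_of_mem_tailHeads hd hdD hq hι,
    tupleCount_add_one_of_mem_tailHeads hd' hd'D hq' hκ]

lemma dpArray_succ (hD : 1 ≤ D) {d d' : ℕ} (hd : 1 ≤ d) (hdD : d ≤ D) (hd' : 1 ≤ d')
    (hd'D : d' ≤ D) (m : ℕ) (i : Fin L) (j : Fin L') :
    dpArray D g (m + 1) d d' i j = g i j * ((if d = 1 ∧ d' = 1 then 1 else 0) +
      ((d : ℝ) * (d' : ℝ))⁻¹ *
        ∑ q ∈ tailHeads D d i, ∑ q' ∈ tailHeads D d' j, dpArray D g m q.2 q'.2 q.1 q'.1) := by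
  simp only [dpArray_eq_sum_dpLayer, sum_range_succ', dpLayer_one g hD hd hd',
    dpLayer_succ_succ g hd hdD hd' hd'D, ← mul_sum]
  have hswap : ∀ f : ℕ → Fin L × ℕ → Fin L' × ℕ → ℝ,
      ∑ k ∈ range m, ∑ q ∈ tailHeads D d i, ∑ q' ∈ tailHeads D d' j, f k q q' =
        ∑ q ∈ tailHeads D d i, ∑ q' ∈ tailHeads D d' j, ∑ k ∈ range m, f k q q' := fun f => by
    rw [sum_comm]
    exact sum_congr rfl fun _ _ => sum_comm
  rw [hswap]
  split_ifs <;> ring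

end Layers

end Tuples

theorem dpArray_recursion_general (D : ℕ) (hD : 1 ≤ D) (L L' : ℕ)
    (g : Fin L → Fin L' → ℝ) (m : ℕ) (hm : 2 ≤ m) (i : Fin L) (j : Fin L') :
    (dpArray D g m 1 1 i j
        = g i j * (1 + ∑ i' ∈ Finset.univ.filter (fun i' => i < i'),
            ∑ j' ∈ Finset.univ.filter (fun j' => j < j'),
              ∑ d ∈ Finset.Icc 1 D, ∑ d' ∈ Finset.Icc 1 D,
                dpArray D g (m - 1) d d' i' j')) ∧
    (∀ d, 2 ≤ d → d ≤ D →
      dpArray D g m d 1 i j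
        = (d : ℝ)⁻¹ * g i j * ∑ j' ∈ Finset.univ.filter (fun j' => j < j'),
            ∑ κ ∈ Finset.Icc 1 D, dpArray D g (m - 1) (d - 1) κ i j') ∧
    (∀ d', 2 ≤ d' → d' ≤ D →
      dpArray D g m 1 d' i j
        = (d' : ℝ)⁻¹ * g i j * ∑ i' ∈ Finset.univ.filter (fun i' => i < i'),
            ∑ κ ∈ Finset.Icc 1 D, dpArray D g (m - 1) κ (d' - 1) i' j) ∧
    (∀ d d', 2 ≤ d → d ≤ D → 2 ≤ d' → d' ≤ D →
      dpArray D g m d d' i j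
        = ((d : ℝ) * (d' : ℝ))⁻¹ * g i j * dpArray D g (m - 1) (d - 1) (d' - 1) i j) := by
  obtain ⟨m, rfl⟩ : ∃ k, m = k + 1 := ⟨m - 1, by omega⟩
  rw [Nat.add_sub_cancel]
  refine ⟨?_, fun d hd hdD => ?_, fun d' hd' hd'D => ?_, fun d d' hd hdD hd' hd'D => ?_⟩
  · rw [dpArray_succ g hD le_rfl hD le_rfl hD, tailHeads_one, tailHeads_one, if_pos ⟨rfl, rfl⟩]
    simp only [sum_product, Nat.cast_one, mul_one, inv_one, one_mul]
    exact congrArg _ (congrArg _ (sum_congr rfl fun _ _ => sum_comm))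
  · rw [dpArray_succ g hD (by omega) hdD le_rfl hD, tailHeads_of_two_le hd, tailHeads_one,
      if_neg (by omega), sum_singleton, sum_product]
    ring
  · rw [dpArray_succ g hD le_rfl hD (by omega) hd'D, tailHeads_one, tailHeads_of_two_le hd',
      if_neg (by omega), sum_product]
    simp only [sum_singleton]
    ring
  · rw [dpArray_succ g hD (by omega) hdD (by omega) hd'D, tailHeads_of_two_le hd,
      tailHeads_of_two_le hd', if_neg (by omega), sum_singleton, sum_singleton]
    ring

/-- Correctness of the recursion for the higher order sequential kernel
(the four recursion equalities of the paper's dynamic-programming algorithm). -/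
theorem dpArray_recursion (D : ℕ) (hD : 1 ≤ D) (L L' : ℕ) (hL : 0 < L) (hL' : 0 < L')
    (g : Fin L → Fin L' → ℝ) (m : ℕ) (hm : 2 ≤ m) (i : Fin L) (j : Fin L') :
    (dpArray D g m 1 1 i j
        = g i j * (1 + ∑ i' ∈ Finset.univ.filter (fun i' => i < i'),
            ∑ j' ∈ Finset.univ.filter (fun j' => j < j'),
              ∑ d ∈ Finset.Icc 1 D, ∑ d' ∈ Finset.Icc 1 D,
                dpArray D g (m - 1) d d' i' j')) ∧
    (∀ d, 2 ≤ d → d ≤ D →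
      dpArray D g m d 1 i j
        = (d : ℝ)⁻¹ * g i j * ∑ j' ∈ Finset.univ.filter (fun j' => j < j'),
            ∑ κ ∈ Finset.Icc 1 D, dpArray D g (m - 1) (d - 1) κ i j') ∧
    (∀ d', 2 ≤ d' → d' ≤ D →
      dpArray D g m 1 d' i j
        = (d' : ℝ)⁻¹ * g i j * ∑ i' ∈ Finset.univ.filter (fun i' => i < i'),
            ∑ κ ∈ Finset.Icc 1 D, dpArray D g (m - 1) κ (d' - 1) i' j) ∧
    (∀ d d', 2 ≤ d → d ≤ D → 2 ≤ d' → d' ≤ D →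
      dpArray D g m d d' i j
        = ((d : ℝ) * (d' : ℝ))⁻¹ * g i j * dpArray D g (m - 1) (d - 1) (d' - 1) i j) :=
  dpArray_recursion_general D hD L L' g m hm i j
end

section
/- Let X be a set, let k : X × X → ℝ be a symmetric positive semidefinite kernel, and let D, M ∈ ℕ with D ≥ 1. For finite sequences σ = (σ_0, …, σ_L) and τ = (τ_0, …, τ_{L'}) in X define the increment kernel ∇k(σ,τ)(i,j) = k(σ_i, τ_j) + k(σ_{i−1}, τ_{j−1}) − k(σ_{i−1}, τ_j) − k(σ_i, τ_{j−1}) for 1 ≤ i ≤ L, 1 ≤ j ≤ L', and define the order-D sequentialization truncated at level M by k⁺_{(D),M}(σ,τ) = Σ_{(𝐢,𝐣)} (1/(𝐢!·𝐣!)) · ∏_{r=1}^{m} ∇k(σ,τ)(i_r, j_r), where the sum ranges over all pairs (𝐢,𝐣) of weakly increasing tuples of the same length m with 0 ≤ m ≤ M, 𝐢 with values in {1,…,L} and 𝐣 with values in {1,…,L'}, in each of which every value occurs at most D times (the empty pair contributing 1). Then k⁺_{(D),M} is a symmetric positive semidefinite kernel on the set of finite sequences in X: for every n, every sequences σ^{(1)},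 …, σ^{(n)} and every c_1, …, c_n ∈ ℝ, one has Σ_{a,b=1}^{n} c_a c_b · k⁺_{(D),M}(σ^{(a)}, σ^{(b)}) ≥ 0. -/
open Classical Finset in
/-- The order-`D` sequentialization of a kernel `k`, truncated at level `M`:
`k⁺_{(D),M}(σ,τ) = ∑_{m=0}^{M} ∑_{(𝐢,𝐣)} (1/(𝐢!·𝐣!)) ∏_r ∇k(σ,τ)(i_r,j_r)`, the sum
ranging over pairs of weakly increasing tuples of equal length `m` in which each
value occurs at most `D` times. -/
noncomputable def seqKernelHigher {X : Type*} (k : X → X → ℝ) (D M : ℕ) {L L' : ℕ}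
    (σ : Fin (L + 1) → X) (τ : Fin (L' + 1) → X) : ℝ :=
  ∑ m ∈ Finset.range (M + 1),
    ∑ ι ∈ Finset.univ.filter (fun ι : Fin m → Fin L =>
        Monotone ι ∧ ∀ v, (Finset.univ.filter (fun r => ι r = v)).card ≤ D),
      ∑ κ ∈ Finset.univ.filter (fun κ : Fin m → Fin L' =>
          Monotone κ ∧ ∀ v, (Finset.univ.filter (fun r => κ r = v)).card ≤ D),
        ((tupleFact ι : ℝ) * (tupleFact κ : ℝ))⁻¹ * ∏ r, incKernel k σ τ (ι r) (κ r)

/-!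
A real kernel `k` on `X` is treated as the matrix `Matrix.of k` indexed by `X`; positive
semidefiniteness in the sense of `Matrix.PosSemidef` (finitely supported test vectors) includes
symmetry. The increment `∇k(σ,τ)(i,j)` is the `k`-Gram form of the signed pairs
`δ_{σ_i} - δ_{σ_{i-1}}` and `δ_{τ_j} - δ_{τ_{j-1}}`, so `∇k` is a positive semidefinite kernel on
pointed sequences `(σ, i)`. By the Schur product theorem so are its tensor powers, and the level-`m`
part of `k⁺_{(D),M}` is the Gram form of the `m`-th tensor power evaluated on the finite weighted
combinations `∑_𝐢 (1/𝐢!) δ_{(σ,i_1)} ⊗ ⋯ ⊗ δ_{(σ,i_m)}`. Summing over `m ≤ M` gives the claim.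
-/

namespace Matrix

variable {Y Z : Type*}

theorem posSemidef_of_forall_fin {K : Y → Y → ℝ} (hsymm : ∀ y z, K y z = K z y)
    (h : ∀ n (y : Fin n → Y) (c : Fin n → ℝ), 0 ≤ ∑ a, ∑ b, c a * c b * K (y a) (y b)) :
    (of K).PosSemidef := by
  refine ⟨by ext y z; exact hsymm z y, fun x => ?_⟩
  let e := x.support.equivFin.symm
  calc 0 ≤ ∑ a, ∑ b, x (e a) * x (e b) * K (e a) (e b) := h _ (fun a => e a) (fun a => x (e a))
    _ = ∑ i : x.support, ∑ j : x.support, x i * x j * K i j :=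
      Fintype.sum_equiv e _ _ fun a => Fintype.sum_equiv e _ _ fun b => rfl
    _ = _ := by
      simp only [Finsupp.sum, star_trivial, of_apply]
      rw [← Finset.sum_coe_sort x.support]
      refine Finset.sum_congr rfl fun i _ => ?_
      rw [← Finset.sum_coe_sort x.support]
      exact Finset.sum_congr rfl fun j _ => by ring

theorem PosSemidef.sum_sum_mul_nonneg {T : Type*} {K : Y → Y → ℝ} (hK : (of K).PosSemidef)
    (t : Finset T) (y : T → Y) (c : T → ℝ) :
    0 ≤ ∑ a ∈ t, ∑ b ∈ t, c a * c b * K (y a) (y b) := by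
  have := (hK.submatrix fun a : t => y a).dotProduct_mulVec_nonneg fun a => c a
  simp only [dotProduct, mulVec, star_trivial, submatrix_apply, of_apply, Finset.mul_sum] at this
  rw [← Finset.sum_coe_sort t]
  refine this.trans_eq (Finset.sum_congr rfl fun a _ => ?_)
  rw [← Finset.sum_coe_sort t]
  exact Finset.sum_congr rfl fun b _ => by ring

theorem PosSemidef.apply_comm {K : Y → Y → ℝ} (hK : (of K).PosSemidef) (y z : Y) :
    K y z = K z y := by
  simpa using hK.isHermitian.apply z y

theorem posSemidef_of_const_one : (of fun _ _ : Y => (1 : ℝ)).PosSemidef :=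
  ⟨by ext; rfl, fun x => by
    simpa only [of_apply, star_trivial, mul_one, ← Finsupp.mul_sum, ← Finsupp.sum_mul]
      using mul_self_nonneg (x.sum fun _ xi => xi)⟩

theorem posSemidef_of_sum {ι : Type*} (s : Finset ι) {K : ι → Y → Y → ℝ}
    (hK : ∀ r ∈ s, (of (K r)).PosSemidef) : (of fun y z => ∑ r ∈ s, K r y z).PosSemidef := by
  convert posSemidef_sum s hK
  ext y z
  simp [sum_apply]

theorem posSemidef_of_prod {ι : Type*} (s : Finset ι) {K : ι → Y → Y → ℝ}
    (hK : ∀ r ∈ s, (of (K r)).PosSemidef) : (of fun y z => ∏ r ∈ s, K r y z).PosSemidef := by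
  classical
  induction s using Finset.induction_on with
  | empty => simpa using posSemidef_of_const_one
  | insert r s hr ih =>
    simp_rw [Finset.prod_insert hr]
    exact (hK r (s.mem_insert_self r)).hadamard (ih fun r' hr' => hK r' (s.mem_insert_of_mem hr'))

theorem PosSemidef.tensorPow {K : Y → Y → ℝ} (hK : (of K).PosSemidef) (m : ℕ) :
    (of fun f g : Fin m → Y => ∏ r, K (f r) (g r)).PosSemidef :=
  posSemidef_of_prod (K := fun r (f g : Fin m → Y) => K (f r) (g r)) _ fun r _ =>
    hK.submatrix fun f : Fin m → Y => f r

theorem PosSemidef.sum_sum_comp {ι : Y → Type*} {K : Z → Z → ℝ} (hK : (of K).PosSemidef)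
    (s : ∀ y, Finset (ι y)) (φ : ∀ y, ι y → Z) (w : ∀ y, ι y → ℝ) :
    (of fun y y' => ∑ i ∈ s y, ∑ j ∈ s y', w y i * w y' j * K (φ y i) (φ y' j)).PosSemidef := by
  refine posSemidef_of_forall_fin (fun y y' => ?_) fun n y c => ?_
  · rw [Finset.sum_comm]
    exact Finset.sum_congr rfl fun j _ => Finset.sum_congr rfl fun i _ => by
      rw [hK.apply_comm]; ring
  · refine (hK.sum_sum_mul_nonneg (Finset.univ.sigma fun a => s (y a))
      (fun p => φ (y p.1) p.2) fun p => c p.1 * w (y p.1) p.2).trans_eq ?_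
    simp only [Finset.sum_sigma, Finset.mul_sum]
    refine Finset.sum_congr rfl fun a _ => ?_
    rw [Finset.sum_comm]
    exact Finset.sum_congr rfl fun b _ => Finset.sum_congr rfl fun i _ =>
      Finset.sum_congr rfl fun j _ => by ring

end Matrix

open Matrix

theorem incKernel_posSemidef {X : Type*} {k : X → X → ℝ} (hk : (of k).PosSemidef) :
    (of fun p q : Σ L : ℕ, (Fin (L + 1) → X) × Fin L =>
      incKernel k p.2.1 q.2.1 p.2.2 q.2.2).PosSemidef := by
  convert hk.sum_sum_comp (ι := fun _ => Bool) (fun _ => Finset.univ)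
    (fun (p : Σ L : ℕ, (Fin (L + 1) → X) × Fin L) b =>
      p.2.1 (if b then p.2.2.succ else p.2.2.castSucc))
    (fun _ b => if b then 1 else -1) using 1
  ext p q
  simp only [incKernel, of_apply, Fintype.sum_bool, ↓reduceIte, Bool.false_eq_true]
  ring

theorem seqKernelHigher_posSemidef {X : Type*} {k : X → X → ℝ} (hk : (of k).PosSemidef)
    (D M : ℕ) : (of fun p q : Σ L : ℕ, Fin (L + 1) → X =>
      seqKernelHigher k D M p.2 q.2).PosSemidef := by
  simp only [seqKernelHigher, mul_inv]
  refine posSemidef_of_sum _ fun m _ => ?_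
  exact ((incKernel_posSemidef hk).tensorPow m).sum_sum_comp
    (fun p : Σ L : ℕ, Fin (L + 1) → X => Finset.univ.filter fun ι : Fin m → Fin p.1 =>
      Monotone ι ∧ ∀ v, (Finset.univ.filter fun r => ι r = v).card ≤ D)
    (fun p ι r => ⟨p.1, p.2, ι r⟩) fun _ ι => (tupleFact ι : ℝ)⁻¹

theorem seqKernelHigher_symm_posSemidef_general {X : Type*} (k : X → X → ℝ)
    (hsymm : ∀ x y, k x y = k y x)
    (hpsd : ∀ (n : ℕ) (x : Fin n → X) (c : Fin n → ℝ),
      0 ≤ ∑ a, ∑ b, c a * c b * k (x a) (x b))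
    (D M : ℕ) :
    (∀ (L L' : ℕ) (σ : Fin (L + 1) → X) (τ : Fin (L' + 1) → X),
        seqKernelHigher k D M σ τ = seqKernelHigher k D M τ σ) ∧
    (∀ (n : ℕ) (Len : Fin n → ℕ) (σ : ∀ a, Fin (Len a + 1) → X) (c : Fin n → ℝ),
        0 ≤ ∑ a, ∑ b, c a * c b * seqKernelHigher k D M (σ a) (σ b)) := by
  have hK := seqKernelHigher_posSemidef (posSemidef_of_forall_fin hsymm hpsd) D M
  exact ⟨fun L L' σ τ => hK.apply_comm ⟨L, σ⟩ ⟨L', τ⟩,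
    fun n Len σ c => hK.sum_sum_mul_nonneg Finset.univ (fun a => ⟨Len a, σ a⟩) c⟩

/-- The higher order truncated sequentialization of a symmetric positive semidefinite
kernel is again a symmetric positive semidefinite kernel on finite sequences. -/
theorem seqKernelHigher_symm_posSemidef {X : Type*} (k : X → X → ℝ)
    (hsymm : ∀ x y, k x y = k y x)
    (hpsd : ∀ (n : ℕ) (x : Fin n → X) (c : Fin n → ℝ),
      0 ≤ ∑ a, ∑ b, c a * c b * k (x a) (x b))
    (D M : ℕ) (hD : 1 ≤ D) :
    (∀ (L L' : ℕ) (σ : Fin (L + 1) → X) (τ : Fin (L' + 1) → X),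
        seqKernelHigher k D M σ τ = seqKernelHigher k D M τ σ) ∧
    (∀ (n : ℕ) (Len : Fin n → ℕ) (σ : ∀ a, Fin (Len a + 1) → X) (c : Fin n → ℝ),
        0 ≤ ∑ a, ∑ b, c a * c b * seqKernelHigher k D M (σ a) (σ b)) :=
  seqKernelHigher_symm_posSemidef_general k hsymm hpsd D M
end
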